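/- Let ξ : ℤ → {−1,0,1} be a configuration, l ≥ 1 an integer, m ≤ n integers, x ∈ ℤ and v ∈ {−1,0,1}. Then g^l_{m,n}(ξ^{x→v}) ≥ g^l_{m,n}(ξ) − 3; moreover, if l ≥ 2, then g^l_{m,n}(ξ^{x→v}) ≥ g^l_{m,n}(ξ) − 2. That is, a single-site change destroys at most three counted maximal l-runs, and at most two when l ≥ 2. -/
import Mathlib


/-- `ξ` has a maximal `l`-run of sign `s` at `a` within `[m, n]`:
`ξ (a+i) = s` for `0 ≤ i ≤ l-1`, `ξ (a-1) ≠ s`, `ξ (a+l) ≠ s`, `m ≤ a`, `a+l-1 ≤ n`. -/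
def IsMaxRun (ξ : ℤ → ℤ) (l m n a s : ℤ) : Prop :=
  (∀ i : ℤ, 0 ≤ i → i ≤ l - 1 → ξ (a + i) = s) ∧
    ξ (a - 1) ≠ s ∧ ξ (a + l) ≠ s ∧ m ≤ a ∧ a + l - 1 ≤ n

/-- `g^l_{m,n}(ξ)`: the number of pairs `(a, s)` with `s ∈ {−1, 1}` such that
`ξ` has a maximal `l`-run of sign `s` at `a` within `[m, n]`. -/
noncomputable def runCount (l m n : ℤ) (ξ : ℤ → ℤ) : ℕ :=
  Set.ncard {p : ℤ × ℤ | (p.2 = 1 ∨ p.2 = -1) ∧ IsMaxRun ξ l m n p.1 p.2}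

/-- Two maximal runs with overlapping intervals coincide (aux: strict order case). -/
lemma run_overlap_aux {ξ : ℤ → ℤ} {l m n a s a' s' y : ℤ}
    (h : IsMaxRun ξ l m n a s) (h' : IsMaxRun ξ l m n a' s')
    (h2 : y ≤ a + l - 1) (h3 : a' ≤ y) (hlt : a < a') : False := by
  have e1 : ξ (a + (a' - a)) = s := h.1 _ (by omega) (by omega)
  have e2 : ξ (a + (a' - 1 - a)) = s := h.1 _ (by omega) (by omega)
  have e3 : ξ (a' + 0) = s' := h'.1 0 le_rfl (by omega)
  rw [show a + (a' - a) = a' + 0 by ring] at e1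
  rw [show a + (a' - 1 - a) = a' - 1 by ring] at e2
  have hss : s = s' := e1 ▸ e3
  exact h'.2.1 (by rw [e2, hss])

/-- Two maximal runs with overlapping intervals coincide. -/
lemma run_overlap {ξ : ℤ → ℤ} {l m n a s a' s' : ℤ} (y : ℤ)
    (h : IsMaxRun ξ l m n a s) (h' : IsMaxRun ξ l m n a' s')
    (h1 : a ≤ y) (h2 : y ≤ a + l - 1) (h3 : a' ≤ y) (h4 : y ≤ a' + l - 1) :
    a = a' ∧ s = s' := by
  rcases lt_trichotomy a a' with hlt | heq | hgt
  · exact absurd (run_overlap_aux (y := y) h h' h2 h3 hlt) not_false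
  · refine ⟨heq, ?_⟩
    have e1 : ξ (a + 0) = s := h.1 0 le_rfl (by omega)
    have e2 : ξ (a' + 0) = s' := h'.1 0 le_rfl (by omega)
    rw [heq] at e1; exact e1 ▸ e2
  · exact absurd (run_overlap_aux (y := y) h' h h4 h1 hgt) not_false

/-- A run far from the updated site survives the update. -/
lemma run_far {ξ : ℤ → ℤ} {x : ℤ} (v : ℤ) {l m n a s : ℤ} (hl : 1 ≤ l)
    (h : IsMaxRun ξ l m n a s) (hx : x < a - 1 ∨ a + l < x) :
    IsMaxRun (Function.update ξ x v) l m n a s := by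
  obtain ⟨hr, hL, hR, hm, hn⟩ := h
  have key : ∀ y : ℤ, a - 1 ≤ y → y ≤ a + l → y ≠ x := by
    intro y hy1 hy2; rcases hx with hx | hx <;> omega
  refine ⟨fun i h0 h1 => ?_, ?_, ?_, hm, hn⟩
  · rw [Function.update_of_ne (key (a + i) (by omega) (by omega))]; exact hr i h0 h1
  · rw [Function.update_of_ne (key (a - 1) (by omega) (by omega))]; exact hL
  · rw [Function.update_of_ne (key (a + l) (by omega) (by omega))]; exact hR

lemma runSet_finite (η : ℤ → ℤ) (l m n : ℤ) (hl : 1 ≤ l) :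
    {p : ℤ × ℤ | (p.2 = 1 ∨ p.2 = -1) ∧ IsMaxRun η l m n p.1 p.2}.Finite := by
  apply Set.Finite.subset ((Set.finite_Icc m n).prod ((Set.finite_singleton (-1 : ℤ)).insert 1))
  rintro ⟨a, s⟩ ⟨hs, h⟩
  refine Set.mem_prod.2 ⟨⟨h.2.2.2.1, by have := h.2.2.2.2; simp at *; omega⟩, ?_⟩
  simpa using hs

theorem runCount_update_ge (ξ : ℤ → ℤ) (hξ : ∀ x, ξ x = -1 ∨ ξ x = 0 ∨ ξ x = 1)
    (l m n : ℤ) (hl : 1 ≤ l) (hmn : m ≤ n)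
    (x v : ℤ) (hv : v = -1 ∨ v = 0 ∨ v = 1) :
    (runCount l m n (Function.update ξ x v) : ℤ) ≥ (runCount l m n ξ : ℤ) - 3 ∧
      (2 ≤ l →
        (runCount l m n (Function.update ξ x v) : ℤ) ≥ (runCount l m n ξ : ℤ) - 2) := by
  classical
  set ξ' := Function.update ξ x v with hξ'def
  set S : Set (ℤ × ℤ) := {p | (p.2 = 1 ∨ p.2 = -1) ∧ IsMaxRun ξ l m n p.1 p.2} with hSdef
  set S' : Set (ℤ × ℤ) := {p | (p.2 = 1 ∨ p.2 = -1) ∧ IsMaxRun ξ' l m n p.1 p.2} with hS'def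
  have hSfin : S.Finite := runSet_finite ξ l m n hl
  have hS'fin : S'.Finite := runSet_finite ξ' l m n hl
  have hcS : runCount l m n ξ = S.ncard := rfl
  have hcS' : runCount l m n ξ' = S'.ncard := rfl
  set D : Set (ℤ × ℤ) := S \ S' with hDdef
  -- every destroyed run is near x
  have hnear : ∀ p ∈ D, p.1 - 1 ≤ x ∧ x ≤ p.1 + l := by
    rintro ⟨a, s⟩ ⟨hpS, hpS'⟩
    by_contra hcon
    exact hpS' ⟨hpS.1, run_far v hl hpS.2 (by omega)⟩
  set C : Set (ℤ × ℤ) := {p | p ∈ D ∧ p.1 ≤ x ∧ x ≤ p.1 + l - 1} with hCdef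
  have hCsub : ∀ p ∈ C, ∀ q ∈ C, p = q := by
    rintro ⟨a, s⟩ ⟨hp, hp1, hp2⟩ ⟨a', s'⟩ ⟨hq, hq1, hq2⟩
    have h1 := hp.1.2
    have h2 := hq.1.2
    have := run_overlap x h1 h2 hp1 hp2 hq1 hq2
    simp only [Prod.mk.injEq]; exact ⟨this.1, this.2⟩
  have hCfin : C.Finite := hSfin.subset (fun p hp => hp.1.1)
  have hCcard : C.ncard ≤ 1 := by
    rcases C.eq_empty_or_nonempty with h | ⟨p, hp⟩
    · simp [h]
    · have : C ⊆ {p} := fun q hq => by simp [hCsub q hq p hp]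
      calc C.ncard ≤ ({p} : Set (ℤ × ℤ)).ncard := Set.ncard_le_ncard this (Set.finite_singleton p)
        _ = 1 := Set.ncard_singleton p
  -- classification of destroyed runs
  have hclass : ∀ p ∈ D, p = (x + 1, ξ (x + 1)) ∨ p = (x - l, ξ (x - l)) ∨ p ∈ C := by
    rintro ⟨a, s⟩ hp
    obtain ⟨hn1, hn2⟩ := hnear _ hp
    have hrun := hp.1.2
    have hval : ξ a = s := by have := hrun.1 0 le_rfl (by omega); simpa using this
    rcases lt_trichotomy x a with hlt | heq | hgt
    · left
      have : a = x + 1 := by omega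
      simp [this, ← hval]
    · right; right; exact ⟨hp, by omega, by omega⟩
    · by_cases hmid : x ≤ a + l - 1
      · right; right; exact ⟨hp, by omega, hmid⟩
      · right; left
        have : a = x - l := by omega
        simp [this, ← hval]
  have hDsub : D ⊆ insert (x + 1, ξ (x + 1)) (insert (x - l, ξ (x - l)) C) := by
    intro p hp
    rcases hclass p hp with h | h | h
    · exact Set.mem_insert_iff.2 (Or.inl h)
    · exact Set.mem_insert_iff.2 (Or.inr (Set.mem_insert_iff.2 (Or.inl h)))
    · exact Set.mem_insert_iff.2 (Or.inr (Set.mem_insert_iff.2 (Or.inr h)))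
  have hDfin : D.Finite := hSfin.subset Set.diff_subset
  have hD3 : D.ncard ≤ 3 := by
    calc D.ncard ≤ (insert (x + 1, ξ (x + 1)) (insert (x - l, ξ (x - l)) C)).ncard :=
          Set.ncard_le_ncard hDsub (((hCfin.insert _).insert _))
      _ ≤ (insert (x - l, ξ (x - l)) C).ncard + 1 := Set.ncard_insert_le _ _
      _ ≤ C.ncard + 1 + 1 := by gcongr; exact Set.ncard_insert_le _ _
      _ ≤ 3 := by omega
  -- main counting
  have hkey : ∀ k : ℕ, D.ncard ≤ k →
      (runCount l m n ξ' : ℤ) ≥ (runCount l m n ξ : ℤ) - k := by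
    intro k hk
    have h1 : (S ∩ S').ncard + D.ncard = S.ncard :=
      Set.ncard_inter_add_ncard_diff_eq_ncard S S' hSfin
    have h2 : (S ∩ S').ncard ≤ S'.ncard :=
      Set.ncard_le_ncard Set.inter_subset_right hS'fin
    rw [hcS, hcS']
    push_cast
    omega
  refine ⟨hkey 3 hD3, fun hl2 => hkey 2 ?_⟩
  -- l ≥ 2 : destroyed runs ≤ 2
  rcases C.eq_empty_or_nonempty with hCe | ⟨⟨a0, s0⟩, hC0⟩
  · have : D ⊆ insert (x + 1, ξ (x + 1)) ({(x - l, ξ (x - l))} : Set (ℤ × ℤ)) := by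
      intro p hp
      rcases hclass p hp with h | h | h
      · exact Set.mem_insert_iff.2 (Or.inl h)
      · exact Set.mem_insert_iff.2 (Or.inr (by simp [h]))
      · rw [hCe] at h; exact absurd h (Set.notMem_empty p)
    calc D.ncard ≤ (insert (x + 1, ξ (x + 1)) ({(x - l, ξ (x - l))} : Set (ℤ × ℤ))).ncard :=
          Set.ncard_le_ncard this ((Set.finite_singleton _).insert _)
      _ ≤ 1 + 1 := by
          have := Set.ncard_insert_le (x + 1, ξ (x + 1)) ({(x - l, ξ (x - l))} : Set (ℤ × ℤ))
          simpa using this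
      _ ≤ 2 := by omega
  · obtain ⟨hD0, hx1, hx2⟩ := hC0
    have h0 := hD0.1.2
    by_cases ha0 : a0 = x
    · -- runs at x+1 impossible
      have : D ⊆ insert (x - l, ξ (x - l)) C := by
        intro p hp
        rcases hclass p hp with h | h | h
        · exfalso
          rcases hp with ⟨hpS, _⟩
          have hrun : IsMaxRun ξ l m n (x + 1) (ξ (x + 1)) := by
            have := hpS.2; rw [h] at this; exact this
          have := run_overlap (x + 1) h0 hrun (by omega) (by omega) le_rfl (by omega)
          omega
        · exact Set.mem_insert_iff.2 (Or.inl h)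
        · exact Set.mem_insert_iff.2 (Or.inr h)
      calc D.ncard ≤ (insert (x - l, ξ (x - l)) C).ncard :=
            Set.ncard_le_ncard this (hCfin.insert _)
        _ ≤ C.ncard + 1 := Set.ncard_insert_le _ _
        _ ≤ 2 := by omega
    · -- a0 < x, runs at x - l impossible
      have ha0' : a0 < x := lt_of_le_of_ne hx1 ha0
      have : D ⊆ insert (x + 1, ξ (x + 1)) C := by
        intro p hp
        rcases hclass p hp with h | h | h
        · exact Set.mem_insert_iff.2 (Or.inl h)
        · exfalso
          rcases hp with ⟨hpS, _⟩
          have hrun : IsMaxRun ξ l m n (x - l) (ξ (x - l)) := by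
            have := hpS.2; rw [h] at this; exact this
          have := run_overlap (x - 1) h0 hrun (by omega) (by omega) (by omega) (by omega)
          omega
        · exact Set.mem_insert_iff.2 (Or.inr h)
      calc D.ncard ≤ (insert (x + 1, ξ (x + 1)) C).ncard :=
            Set.ncard_le_ncard this (hCfin.insert _)
        _ ≤ C.ncard + 1 := Set.ncard_insert_le _ _
        _ ≤ 2 := by omega
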